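/- arXiv:2601.09674 — 4 statements merged into one kernel-verified Lean document; each statement's English description precedes it below -/
import Mathlib

section
/- Let γ and κ be integers with γ > 3 and κ > 3. Define D = 4γκ − 6γ − 6κ + 8, l = (1 + 1/D)^{1/8} − 1, u = (γ−1)(κ−1)·l, and E = C(γ,2)·C(κ,2)/D, where C(n,2) = n(n−1)/2. Then (1 + u)^{γκ} < exp(E). -/
/-- For integers `γ, κ > 3`, with `D = 4γκ − 6γ − 6κ + 8`,
`l = (1 + 1/D)^{1/8} − 1`, `u = (γ−1)(κ−1)·l`, and `E = C(γ,2)·C(κ,2)/D`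
(where `C(n,2) = n(n−1)/2`), we have `(1 + u)^{γκ} < exp(E)`. -/
theorem stmt8 (γ κ : ℕ) (hγ : 3 < γ) (hκ : 3 < κ)
    (D l u E : ℝ)
    (hD : D = 4 * (γ : ℝ) * κ - 6 * γ - 6 * κ + 8)
    (hl : l = (1 + 1 / D) ^ ((1 : ℝ) / 8) - 1)
    (hu : u = ((γ : ℝ) - 1) * ((κ : ℝ) - 1) * l)
    (hE : E = ((γ : ℝ) * ((γ : ℝ) - 1) / 2) * ((κ : ℝ) * ((κ : ℝ) - 1) / 2) / D) :
    (1 + u) ^ (γ * κ) < Real.exp E := by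
  have hγ4 : (4 : ℝ) ≤ (γ : ℝ) := by exact_mod_cast hγ
  have hκ4 : (4 : ℝ) ≤ (κ : ℝ) := by exact_mod_cast hκ
  have hD24 : (24 : ℝ) ≤ D := by nlinarith
  have hDpos : (0 : ℝ) < D := by linarith
  -- l is positive
  have hbase : (1 : ℝ) < 1 + 1 / D := by
    have : 0 < 1 / D := by positivity
    linarith
  have hlpos : 0 < l := by
    rw [hl]
    have h1 : (1:ℝ) < (1 + 1/D) ^ ((1:ℝ)/8) :=
      (Real.one_lt_rpow_iff_of_pos (by linarith)).mpr (Or.inl ⟨hbase, by norm_num⟩)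
    linarith
  -- Bernoulli: l ≤ 1/(8D)
  have hberi : (1 + 1/D) ^ ((1:ℝ)/8) ≤ 1 + (1:ℝ)/8 * (1/D) :=
    rpow_one_add_le_one_add_mul_self (by linarith [one_div_pos.mpr hDpos]) (by norm_num) (by norm_num)
  have hDl8 : l * D ≤ 1/8 := by
    have h8 : (1:ℝ)/8 * (1/D) = 1 / (8*D) := by field_simp
    have hl8 : l ≤ 1 / (8 * D) := by rw [hl]; linarith [h8 ▸ hberi]
    rw [le_div_iff₀ (by positivity)] at hl8
    linarith
  have hupos : 0 < u := by
    rw [hu]; have := hlpos; nlinarith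
  have hnu_le : (γ * κ : ℕ) * u ≤ E := by
    rw [hu, hE]
    push_cast
    rw [le_div_iff₀ hDpos]
    have hcoef : (0:ℝ) ≤ (γ:ℝ) * κ * (((γ:ℝ) - 1) * ((κ:ℝ) - 1)) := by nlinarith
    nlinarith [mul_le_mul_of_nonneg_left hDl8 hcoef]
  have h1u : 1 + u < Real.exp u := by
    have := Real.add_one_lt_exp (ne_of_gt hupos)
    linarith
  have hn : 0 < γ * κ := Nat.mul_pos (by omega) (by omega)
  calc (1 + u) ^ (γ * κ) < (Real.exp u) ^ (γ * κ) := by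
        apply pow_lt_pow_left₀ h1u (by linarith) (by omega)
    _ = Real.exp ((γ * κ : ℕ) * u) := by
        rw [← Real.exp_nat_mul]
    _ ≤ Real.exp E := Real.exp_le_exp.mpr hnu_le
end

section
/- Let γ and κ be integers with γ > 3 and κ > 3, and let X > 0 be a real number. Define D = 4γκ − 6γ − 6κ + 8, l = (1 + 1/D)^{1/8} − 1, u = (γ−1)(κ−1)·l, and E = C(γ,2)·C(κ,2)/D, where C(n,2) = n(n−1)/2. Then (X/(1+u))^{γκ} > X^{γκ}/exp(E); that is, the product-form lower bound is strictly larger than the exponential-penalty lower bound. -/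
/-- For integers `γ, κ > 3` and real `X > 0`, with
`D = 4γκ − 6γ − 6κ + 8`, `l = (1 + 1/D)^{1/8} − 1`, `u = (γ−1)(κ−1)·l`, and
`E = C(γ,2)·C(κ,2)/D` (where `C(n,2) = n(n−1)/2`), we have
`(X/(1+u))^{γκ} > X^{γκ}/exp(E)`. -/
theorem stmt9 (γ κ : ℕ) (hγ : 3 < γ) (hκ : 3 < κ) (X : ℝ) (hX : 0 < X)
    (D l u E : ℝ)
    (hD : D = 4 * (γ : ℝ) * κ - 6 * γ - 6 * κ + 8)
    (hl : l = (1 + 1 / D) ^ ((1 : ℝ) / 8) - 1)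
    (hu : u = ((γ : ℝ) - 1) * ((κ : ℝ) - 1) * l)
    (hE : E = ((γ : ℝ) * ((γ : ℝ) - 1) / 2) * ((κ : ℝ) * ((κ : ℝ) - 1) / 2) / D) :
    X ^ (γ * κ) / Real.exp E < (X / (1 + u)) ^ (γ * κ) := by
  have hγ4 : (4 : ℝ) ≤ (γ : ℝ) := by exact_mod_cast hγ
  have hκ4 : (4 : ℝ) ≤ (κ : ℝ) := by exact_mod_cast hκ
  have hDpos : 0 < D := by
    rw [hD]; nlinarith [mul_nonneg (sub_nonneg.2 hγ4) (sub_nonneg.2 hκ4)]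
  have hDne : D ≠ 0 := ne_of_gt hDpos
  -- l > 0
  have hbase : 1 < 1 + 1 / D := by
    have : 0 < 1 / D := by positivity
    linarith
  have hl_pos : 0 < l := by
    rw [hl]
    have : (1 : ℝ) < (1 + 1 / D) ^ ((1 : ℝ) / 8) :=
      Real.one_lt_rpow_iff_of_pos (by linarith) |>.2 (Or.inl ⟨hbase, by norm_num⟩)
    linarith
  -- l < 1/(4D)
  set t : ℝ := 1 / (4 * D) with ht
  have htpos : 0 < t := by positivity
  have hl_lt : l < t := by
    have h8 : 1 + 1 / D < (1 + t) ^ (8 : ℕ) := by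
      have hb := one_add_mul_le_pow (by linarith : (-2 : ℝ) ≤ t) 8
      have h4 : 4 * t = 1 / D := by rw [ht]; field_simp
      push_cast at hb
      linarith
    have hmono : (1 + 1 / D) ^ ((1 : ℝ) / 8) < ((1 + t) ^ (8 : ℕ)) ^ ((1 : ℝ) / 8) :=
      Real.rpow_lt_rpow (by linarith) h8 (by norm_num)
    have heq : ((1 + t) ^ (8 : ℕ)) ^ ((1 : ℝ) / 8) = 1 + t := by
      have : ((1 : ℝ) / 8) = ((8 : ℕ) : ℝ)⁻¹ := by norm_num
      rw [this, Real.pow_rpow_inv_natCast (by linarith) (by norm_num)]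
    rw [hl]
    rw [heq] at hmono
    linarith
  have hu_pos : 0 < u := by
    rw [hu]
    have h1 : 0 < (γ : ℝ) - 1 := by linarith
    have h2 : 0 < (κ : ℝ) - 1 := by linarith
    positivity
  -- (1+u)^(γκ) < exp E
  have hnu : ((γ * κ : ℕ) : ℝ) * u ≤ E := by
    rw [hu, hE]
    push_cast
    have h1 : (0 : ℝ) ≤ (γ : ℝ) * κ * (((γ : ℝ) - 1) * ((κ : ℝ) - 1)) := by
      have : 0 < (γ : ℝ) - 1 := by linarith
      have : 0 < (κ : ℝ) - 1 := by linarith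
      positivity
    calc (γ : ℝ) * κ * (((γ : ℝ) - 1) * ((κ : ℝ) - 1) * l)
        = ((γ : ℝ) * κ * (((γ : ℝ) - 1) * ((κ : ℝ) - 1))) * l := by ring
      _ ≤ ((γ : ℝ) * κ * (((γ : ℝ) - 1) * ((κ : ℝ) - 1))) * t :=
          mul_le_mul_of_nonneg_left hl_lt.le h1
      _ = (γ : ℝ) * ((γ : ℝ) - 1) / 2 * ((κ : ℝ) * ((κ : ℝ) - 1) / 2) / D := by
          rw [ht]; field_simp; ring
  have h1u : 1 + u < Real.exp u := by
    have := Real.add_one_lt_exp (ne_of_gt hu_pos)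
    linarith
  have hn0 : γ * κ ≠ 0 := by positivity
  have hpow : (1 + u) ^ (γ * κ) < Real.exp E := by
    calc (1 + u) ^ (γ * κ) < (Real.exp u) ^ (γ * κ) :=
          pow_lt_pow_left₀ h1u (by linarith) hn0
      _ = Real.exp (((γ * κ : ℕ) : ℝ) * u) := (Real.exp_nat_mul u (γ * κ)).symm
      _ ≤ Real.exp E := Real.exp_le_exp.2 hnu
  rw [div_pow]
  exact div_lt_div_of_pos_left (pow_pos hX _) (pow_pos (by linarith) _) hpow
end

section
/- (Quantitative Lovász Local Lemma.) Let A_1, …, A_n be events in a probability space and let G = ([n], E) be a dependency graph for them, i.e., for every i and every subset J ⊆ [n] \ (N(i) ∪ {i}) of non-neighbors of i, Pr(A_i ∩ ⋂_{j∈J} A_j^c) = Pr(A_i) · Pr(⋂_{j∈J} A_j^c). If there exist real numbers x_1, …, x_n ∈ (0,1) such that Pr(A_i) ≤ x_i · Π_{j∈N(i)} (1 − x_j) for every i ∈ [n], then Pr(⋂_{i∈[n]} A_i^c) ≥ Π_{j∈[n]} (1 − x_j) > 0. -/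
/-!
Write `B_S = ⋂_{j ∈ S} A_jᶜ`. By strong induction on `S` one shows
`Pr(A_i ∩ B_S) ≤ x_i Pr(B_S)` for `i ∉ S`: split `S` into the neighbours `S₁` of `i` and the rest
`S₂`, so that `Pr(A_i ∩ B_S) ≤ Pr(A_i ∩ B_{S₂}) = Pr(A_i) Pr(B_{S₂})` by independence, while
adding the events of `S₁` one at a time, each step governed by the induction hypothesis, gives
`Pr(B_S) ≥ Pr(B_{S₂}) ∏_{j ∈ S₁} (1 - x_j) ≥ Pr(B_{S₂}) ∏_{j ∈ N(i)} (1 - x_j)`.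
Adding all events one at a time in the same way gives `Pr(B_{[n]}) ≥ ∏_j (1 - x_j)`.
-/

open MeasureTheory Finset

namespace LovaszLocalLemma

variable {Ω ι : Type*} [MeasurableSpace Ω] {P : Measure Ω} [IsFiniteMeasure P]
  [DecidableEq ι] {A : ι → Set Ω} {x : ι → ℝ}

theorem measureReal_biInter_compl_insert {a : ι} (ha : MeasurableSet (A a)) (S : Finset ι) :
    P.real (⋂ j ∈ insert a S, (A j)ᶜ)
      = P.real (⋂ j ∈ S, (A j)ᶜ) - P.real (A a ∩ ⋂ j ∈ S, (A j)ᶜ) := by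
  rw [set_biInter_insert, Set.inter_comm (A a), Set.inter_comm (A a)ᶜ, ← Set.sdiff_eq]
  linarith [measureReal_inter_add_sdiff (μ := P) (s := ⋂ j ∈ S, (A j)ᶜ) ha]

theorem one_sub_mul_le_measureReal_biInter_compl_insert {a : ι} {T : Finset ι}
    (ha : MeasurableSet (A a))
    (hstep : P.real (A a ∩ ⋂ j ∈ T, (A j)ᶜ) ≤ x a * P.real (⋂ j ∈ T, (A j)ᶜ)) :
    (1 - x a) * P.real (⋂ j ∈ T, (A j)ᶜ) ≤ P.real (⋂ j ∈ insert a T, (A j)ᶜ) := by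
  rw [measureReal_biInter_compl_insert ha]
  linarith

theorem prod_one_sub_mul_le_measureReal_biInter_compl {U : Finset ι}
    (hA : ∀ i, MeasurableSet (A i)) (hx : ∀ i, x i ≤ 1)
    (hstep : ∀ a T, a ∉ T → insert a T ⊆ U →
      P.real (A a ∩ ⋂ j ∈ T, (A j)ᶜ) ≤ x a * P.real (⋂ j ∈ T, (A j)ᶜ))
    {S₁ S₂ : Finset ι} (hdisj : Disjoint S₁ S₂) (hU : S₁ ∪ S₂ ⊆ U) :
    (∏ j ∈ S₁, (1 - x j)) * P.real (⋂ j ∈ S₂, (A j)ᶜ) ≤ P.real (⋂ j ∈ S₁ ∪ S₂, (A j)ᶜ) := by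
  induction S₁ using Finset.induction with
  | empty => simp
  | insert a S₁ haS₁ ih =>
    rw [disjoint_insert_left] at hdisj
    rw [insert_union] at hU ⊢
    have haT : a ∉ S₁ ∪ S₂ := by simp [haS₁, hdisj.1]
    calc (∏ j ∈ insert a S₁, (1 - x j)) * P.real (⋂ j ∈ S₂, (A j)ᶜ)
        = (1 - x a) * ((∏ j ∈ S₁, (1 - x j)) * P.real (⋂ j ∈ S₂, (A j)ᶜ)) := by
          rw [prod_insert haS₁, mul_assoc]
      _ ≤ (1 - x a) * P.real (⋂ j ∈ S₁ ∪ S₂, (A j)ᶜ) :=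
          mul_le_mul_of_nonneg_left (ih hdisj.2 ((subset_insert _ _).trans hU))
            (sub_nonneg.2 (hx a))
      _ ≤ P.real (⋂ j ∈ insert a (S₁ ∪ S₂), (A j)ᶜ) :=
          one_sub_mul_le_measureReal_biInter_compl_insert (hA a) (hstep a _ haT hU)

variable [Fintype ι] {G : SimpleGraph ι} [DecidableRel G.Adj]

theorem measureReal_inter_biInter_compl_le (hA : ∀ i, MeasurableSet (A i))
    (hdep : ∀ i (J : Finset ι), (∀ j ∈ J, j ≠ i ∧ ¬ G.Adj i j) →
      P.real (A i ∩ ⋂ j ∈ J, (A j)ᶜ) = P.real (A i) * P.real (⋂ j ∈ J, (A j)ᶜ))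
    (hx : ∀ i, x i ∈ Set.Icc 0 1)
    (hcond : ∀ i, P.real (A i) ≤ x i * ∏ j ∈ G.neighborFinset i, (1 - x j))
    (S : Finset ι) {i : ι} (hiS : i ∉ S) :
    P.real (A i ∩ ⋂ j ∈ S, (A j)ᶜ) ≤ x i * P.real (⋂ j ∈ S, (A j)ᶜ) := by
  induction S using Finset.strongInduction generalizing i with
  | H S ih =>
  set S₁ := S ∩ G.neighborFinset i
  set S₂ := S \ G.neighborFinset i
  have hunion : S₁ ∪ S₂ = S := sup_inf_sdiff S _
  have hindep : P.real (A i ∩ ⋂ j ∈ S₂, (A j)ᶜ) = P.real (A i) * P.real (⋂ j ∈ S₂, (A j)ᶜ) :=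
    hdep i S₂ fun j hj ↦ by
      rw [mem_sdiff, SimpleGraph.mem_neighborFinset] at hj
      exact ⟨fun hji ↦ hiS (hji ▸ hj.1), hj.2⟩
  have hneighbours : ∏ j ∈ G.neighborFinset i, (1 - x j) ≤ ∏ j ∈ S₁, (1 - x j) :=
    prod_le_prod_of_subset_of_le_one inter_subset_right
      (fun j _ ↦ sub_nonneg.2 (hx j).2) (fun j _ _ ↦ sub_le_self _ (hx j).1)
  have hpeel : (∏ j ∈ S₁, (1 - x j)) * P.real (⋂ j ∈ S₂, (A j)ᶜ) ≤ P.real (⋂ j ∈ S, (A j)ᶜ) := by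
    rw [← hunion]
    refine prod_one_sub_mul_le_measureReal_biInter_compl hA (fun j ↦ (hx j).2)
      (fun a T haT hT ↦ ih T ((ssubset_insert haT).trans_le (hunion ▸ hT)) haT)
      (disjoint_sdiff_inter _ _).symm subset_rfl
  have hB₂ : 0 ≤ P.real (⋂ j ∈ S₂, (A j)ᶜ) := measureReal_nonneg
  calc P.real (A i ∩ ⋂ j ∈ S, (A j)ᶜ)
      ≤ P.real (A i ∩ ⋂ j ∈ S₂, (A j)ᶜ) :=
        measureReal_mono (Set.inter_subset_inter_right _
          (Set.biInter_subset_biInter_left sdiff_subset))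
    _ = P.real (A i) * P.real (⋂ j ∈ S₂, (A j)ᶜ) := hindep
    _ ≤ x i * ((∏ j ∈ S₁, (1 - x j)) * P.real (⋂ j ∈ S₂, (A j)ᶜ)) := by
        rw [← mul_assoc]
        exact mul_le_mul_of_nonneg_right
          ((hcond i).trans (mul_le_mul_of_nonneg_left hneighbours (hx i).1)) hB₂
    _ ≤ x i * P.real (⋂ j ∈ S, (A j)ᶜ) := mul_le_mul_of_nonneg_left hpeel (hx i).1

end LovaszLocalLemma

open LovaszLocalLemma in
/-- Quantitative Lovász Local Lemma: if `G` is a dependency graph for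
events `A_1, …, A_n` and there are `x_i ∈ (0,1)` with
`Pr(A_i) ≤ x_i · Π_{j ∈ N(i)} (1 − x_j)` for all `i`, then
`Pr(⋂_i A_iᶜ) ≥ Π_j (1 − x_j) > 0`. -/
theorem stmt10 {Ω : Type*} [MeasurableSpace Ω] (P : Measure Ω) [IsProbabilityMeasure P]
    (n : ℕ) (A : Fin n → Set Ω) (hA : ∀ i, MeasurableSet (A i))
    (G : SimpleGraph (Fin n)) [DecidableRel G.Adj]
    (hdep : ∀ i : Fin n, ∀ J : Finset (Fin n),
      (∀ j ∈ J, j ≠ i ∧ ¬ G.Adj i j) →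
      (P (A i ∩ ⋂ j ∈ J, (A j)ᶜ)).toReal
        = (P (A i)).toReal * (P (⋂ j ∈ J, (A j)ᶜ)).toReal)
    (x : Fin n → ℝ) (hx : ∀ i, x i ∈ Set.Ioo (0 : ℝ) 1)
    (hcond : ∀ i, (P (A i)).toReal ≤ x i * ∏ j ∈ G.neighborFinset i, (1 - x j)) :
    (∏ j, (1 - x j)) ≤ (P (⋂ i, (A i)ᶜ)).toReal ∧ 0 < ∏ j, (1 - x j) := by
  have hstep := measureReal_inter_biInter_compl_le hA hdep (fun i ↦ Set.Ioo_subset_Icc_self (hx i))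
    hcond
  have hbound := prod_one_sub_mul_le_measureReal_biInter_compl hA (fun i ↦ (hx i).2.le)
    (fun a T haT _ ↦ hstep T haT) (disjoint_empty_right univ) subset_rfl
  refine ⟨?_, prod_pos fun j _ ↦ sub_pos.2 (hx j).2⟩
  simpa [measureReal_def] using hbound
end

section
/- Let A be a finite collection of events, where each event A ∈ A is assigned a nonempty finite variable set var(A) ⊆ [n] and a weight μ(A) ≥ 0. Call a subcollection I ⊆ A independent if the variable sets of its members are pairwise disjoint. For each A ∈ A define l(A) = (1 + μ(A))^{1/|var(A)|} − 1. Then Σ_{I independent} Π_{A∈I} μ(A) ≤ Π_{i∈[n]} ( 1 + Σ_{A∈A : i∈var(A)} l(A) ). -/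
/-!
Write `Z(s)` for the sum over the independent subcollections of `s`. Splitting according to
whether an event `B ∉ s` is used gives `Z(s ∪ {B}) = Z(s) + μ(B) Z(s_B)`, where `s_B` consists of
the events of `s` whose variables avoid `var(B)`. By strong induction both terms are bounded by
products over the variables, the second one without the factors for `i ∈ var(B)`. Since
`(1 + l(B))^{|var(B)|} = 1 + μ(B)`, the term `μ(B) Z(s_B)` is absorbed by adding `l(B)` to the
factors for `i ∈ var(B)`, via `∏ xᵢ + (1 + c)^k ≤ 1 + ∏ (xᵢ + c)` for `xᵢ ≥ 1`, `c ≥ 0`.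
-/

open Finset
open scoped Function

section IndependentSum

variable {ι R : Type*} [CommSemiring R] (r : ι → ι → Prop) (w : ι → R)

open Classical in
noncomputable def independentSum (s : Finset ι) : R :=
  ∑ I ∈ s.powerset.filter fun I : Finset ι => (I : Set ι).Pairwise r, ∏ a ∈ I, w a

@[simp]
lemma independentSum_empty : independentSum r w ∅ = 1 := by
  simp [independentSum, filter_singleton]

lemma independentSum_insert [DecidableEq ι] [DecidableRel r] [Std.Symm r] {B : ι}
    {s : Finset ι} (hB : B ∉ s) :
    independentSum r w (insert B s) =
      independentSum r w s + w B * independentSum r w {a ∈ s | r B a} := by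
  have pairwise_insert {I : Finset ι} (hI : I ⊆ s) :
      (↑(insert B I) : Set ι).Pairwise r ↔ (↑I : Set ι).Pairwise r ∧ ∀ b ∈ I, r B b := by
    rw [coe_insert, Set.pairwise_insert_of_symm_of_notMem fun h => hB (hI h)]
    rfl
  simp only [independentSum, sum_filter]
  rw [sum_powerset_insert hB, mul_sum]
  congr 1
  symm
  refine sum_subset_zero_on_sdiff (powerset_mono.2 (filter_subset _ _)) (fun I hI => ?_)
    (fun I hI => ?_)
  · obtain ⟨hIs, hIB⟩ := mem_sdiff.1 hI
    rw [mem_powerset] at hIs hIB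
    exact if_neg fun h => hIB fun b hb =>
      mem_filter.2 ⟨hIs hb, ((pairwise_insert hIs).1 h).2 b hb⟩
  · rw [mem_powerset] at hI
    have hIs : I ⊆ s := hI.trans (filter_subset _ _)
    have hIB : ∀ b ∈ I, r B b := fun b hb => (mem_filter.1 (hI hb)).2
    simp only [pairwise_insert hIs, and_iff_left hIB, prod_insert fun h => hB (hIs h),
      mul_ite, mul_zero]

end IndependentSum

section OrderedRing

variable {α ι R : Type*} [CommRing R] [LinearOrder R] [IsStrictOrderedRing R]

/- The increment `∏ (xᵢ + c) - ∏ xᵢ` is monotone in each `xᵢ ≥ 1`, hence smallest at `x ≡ 1`. -/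
theorem prod_add_pow_card_le_one_add_prod_add {t : Finset α} {x : α → R} {c : R}
    (hx : ∀ i ∈ t, 1 ≤ x i) (hc : 0 ≤ c) :
    ∏ i ∈ t, x i + (1 + c) ^ #t ≤ 1 + ∏ i ∈ t, (x i + c) := by
  classical
  induction t using Finset.induction_on with
  | empty => simp
  | insert j t hj ih =>
    have hxt : ∀ i ∈ t, 1 ≤ x i := fun i hi => hx i (mem_insert_of_mem hi)
    have hxj : 1 ≤ x j := hx j (mem_insert_self j t)
    have hP : 1 ≤ ∏ i ∈ t, x i := one_le_prod hxt
    have hK : 1 ≤ (1 + c) ^ #t := one_le_pow₀ (by linarith)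
    have hKQ : (1 + c) ^ #t ≤ ∏ i ∈ t, (x i + c) := by
      rw [← prod_const]
      exact prod_le_prod (fun _ _ => by linarith) fun i hi => by linarith [hxt i hi]
    rw [prod_insert hj, prod_insert hj, card_insert_of_notMem hj, pow_succ]
    nlinarith [mul_le_mul_of_nonneg_left (ih hxt) (by linarith : (0 : R) ≤ x j),
      mul_nonneg (sub_nonneg.2 hxj) (sub_nonneg.2 hK)]

variable [Fintype α] [DecidableEq α] (var : ι → Finset α) (l : ι → R)

omit [LinearOrder R] [IsStrictOrderedRing R] in
theorem prod_one_add_sum_filter_mem_insert [DecidableEq ι] {B : ι} {t : Finset ι} (hB : B ∉ t) :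
    ∏ i, (1 + ∑ a ∈ insert B t with i ∈ var a, l a) =
      (∏ i ∈ var B, (1 + ∑ a ∈ t with i ∈ var a, l a + l B)) *
        ∏ i ∈ (var B)ᶜ, (1 + ∑ a ∈ t with i ∈ var a, l a) := by
  rw [← prod_mul_prod_compl (var B)]
  congr 1 <;> refine prod_congr rfl fun i hi => ?_
  · rw [filter_insert, if_pos hi, sum_insert fun h => hB (mem_filter.1 h).1]
    ring
  · rw [filter_insert, if_neg (mem_compl.1 hi)]

theorem prod_one_add_sum_filter_mem_le_prod_compl (hl : ∀ a, 0 ≤ l a) {S : Finset α}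
    {s t : Finset ι} (hst : s ⊆ t) (hS : ∀ a ∈ s, Disjoint S (var a)) :
    ∏ i, (1 + ∑ a ∈ s with i ∈ var a, l a) ≤ ∏ i ∈ Sᶜ, (1 + ∑ a ∈ t with i ∈ var a, l a) := by
  have hS_eq_one : ∏ i ∈ S, (1 + ∑ a ∈ s with i ∈ var a, l a) = 1 :=
    prod_eq_one fun i hi => by
      rw [sum_eq_zero fun a ha => absurd hi (disjoint_right.1 (hS a (mem_filter.1 ha).1)
        (mem_filter.1 ha).2), add_zero]
  rw [← prod_mul_prod_compl S, hS_eq_one, one_mul]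
  exact prod_le_prod (fun i _ => add_nonneg zero_le_one (sum_nonneg fun a _ => hl a))
    fun i _ => add_le_add_right (sum_le_sum_of_subset_of_nonneg (monotone_filter_left _ hst)
      fun a _ _ => hl a) 1

theorem independentSum_le_prod_one_add_sum [DecidableEq ι] {w : ι → R} (hw : ∀ a, 0 ≤ w a)
    (hl : ∀ a, 0 ≤ l a) (hwl : ∀ a, 1 + w a ≤ (1 + l a) ^ #(var a)) (s : Finset ι) :
    independentSum (Disjoint on var) w s ≤ ∏ i, (1 + ∑ a ∈ s with i ∈ var a, l a) := by
  induction s using Finset.case_strong_induction_on with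
  | h₀ => simp
  | h₁ B t hB ih =>
    set U : α → R := fun i => 1 + ∑ a ∈ t with i ∈ var a, l a
    have hU : ∀ i, 1 ≤ U i := fun i => le_add_of_nonneg_right (sum_nonneg fun a _ => hl a)
    have hZt : independentSum (Disjoint on var) w t ≤ (∏ i ∈ var B, U i) * ∏ i ∈ (var B)ᶜ, U i :=
      (ih t subset_rfl).trans_eq (prod_mul_prod_compl _ _).symm
    have hZdisj : independentSum (Disjoint on var) w {a ∈ t | (Disjoint on var) B a} ≤
        ∏ i ∈ (var B)ᶜ, U i :=
      (ih _ (filter_subset _ _)).trans <| prod_one_add_sum_filter_mem_le_prod_compl var l hl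
        (filter_subset _ _) fun a ha => (mem_filter.1 ha).2
    have hB_step : ∏ i ∈ var B, U i + w B ≤ ∏ i ∈ var B, (U i + l B) := by
      linarith [prod_add_pow_card_le_one_add_prod_add (t := var B) (fun i _ => hU i) (hl B), hwl B]
    rw [independentSum_insert _ _ hB, prod_one_add_sum_filter_mem_insert var l hB]
    calc _ ≤ (∏ i ∈ var B, U i) * ∏ i ∈ (var B)ᶜ, U i + w B * ∏ i ∈ (var B)ᶜ, U i :=
          add_le_add hZt (mul_le_mul_of_nonneg_left hZdisj (hw B))
      _ = (∏ i ∈ var B, U i + w B) * ∏ i ∈ (var B)ᶜ, U i := by ring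
      _ ≤ _ := mul_le_mul_of_nonneg_right hB_step
          (prod_nonneg fun i _ => zero_le_one.trans (hU i))

end OrderedRing

/-- Events `A ∈ 𝒜` with nonempty variable sets `var(A) ⊆ [n]` and
weights `μ(A) ≥ 0`; a subcollection is independent iff its variable sets are pairwise
disjoint. With `l(A) = (1 + μ(A))^{1/|var(A)|} − 1`, we have
`Σ_{I independent} Π_{A∈I} μ(A) ≤ Π_{i∈[n]} (1 + Σ_{A : i∈var(A)} l(A))`. -/
theorem stmt14 {ι : Type*} [Fintype ι] [DecidableEq ι] (n : ℕ)
    (var : ι → Finset (Fin n)) (hvar : ∀ a, (var a).Nonempty)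
    (μ : ι → ℝ) (hμ : ∀ a, 0 ≤ μ a) :
    (∑ I ∈ Finset.univ.filter (fun I : Finset ι =>
        ∀ a ∈ I, ∀ b ∈ I, a ≠ b → Disjoint (var a) (var b)), ∏ a ∈ I, μ a)
      ≤ ∏ i : Fin n, (1 + ∑ a ∈ Finset.univ.filter (fun a : ι => i ∈ var a),
          ((1 + μ a) ^ ((1 : ℝ) / (var a).card) - 1)) := by
  have hroot : ∀ a, 1 ≤ (1 + μ a) ^ ((1 : ℝ) / #(var a)) := fun a =>
    Real.one_le_rpow (le_add_of_nonneg_right (hμ a)) (by positivity)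
  have hpow : ∀ a, (1 + ((1 + μ a) ^ ((1 : ℝ) / #(var a)) - 1)) ^ #(var a) = 1 + μ a :=
    fun a => by rw [add_sub_cancel, one_div,
      Real.rpow_inv_natCast_pow (by linarith [hμ a]) (hvar a).card_pos.ne']
  have key := independentSum_le_prod_one_add_sum var
    (fun a => (1 + μ a) ^ ((1 : ℝ) / #(var a)) - 1) hμ (fun a => sub_nonneg.2 (hroot a))
    (fun a => (hpow a).ge) univ
  refine le_of_eq_of_le ?_ key
  rw [independentSum, powerset_univ]
  congr 1
  ext I
  simp only [mem_filter, Set.Pairwise, mem_coe, Function.onFun]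
end
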